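/- arXiv:2503.08927 — 3 statements merged into one kernel-verified Lean document; each statement's English description precedes it below -/
import Mathlib

section
/- Let T > 0, let d_D, d_T, r_R ≥ 0, and let u : [0,T] → [0,1] be measurable. If x = (s, r) is a trajectory of the controlled Lotka–Volterra system with x(0) ∈ Δ, then x(τ) ∈ Δ for every τ ∈ [0,T]. -/
open MeasureTheory Set

def simplexΔ : Set (ℝ × ℝ) := {p : ℝ × ℝ | 0 ≤ p.1 ∧ 0 ≤ p.2 ∧ p.1 + p.2 ≤ 1}

open intervalIntegral

/-!
Each of `s`, `r` and `1 - s - r` is an integral-form solution of `f' = c f + h` whose coefficient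
`c` is bounded on `[0, T]` (because `s`, `r` are continuous and `u ∈ [0, 1]`) and whose source
`h` is nonnegative: `h = 0` for `s` and `r`, and `h = d_T (s + r)` for `1 - s - r` once `s, r ≥ 0`
are known. Such an `f` cannot become negative. After the last time `t₁` before a negative value
at which `f ≥ 0`, we have `f ≤ 0` and hence `f' ≥ M f` for an upper bound `M ≥ 0` of `c`; then
`Ψ = -∫_{t₁} f` satisfies `Ψ' ≤ M Ψ`, `Ψ(t₁) = 0`, so `Ψ ≤ 0` by Grönwall, and `-f ≤ M Ψ ≤ 0`.
-/

section IntegralForm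

variable {a b : ℝ} {f g : ℝ → ℝ}

theorem eq_add_integral_of_mem_Icc (hg : IntervalIntegrable g volume a b)
    (heq : ∀ τ ∈ Icc a b, f τ = f a + ∫ σ in a..τ, g σ) {c τ : ℝ}
    (hc : c ∈ Icc a b) (hτ : τ ∈ Icc a b) : f τ = f c + ∫ σ in c..τ, g σ := by
  have hab : a ≤ b := hc.1.trans hc.2
  have hint : ∀ x ∈ Icc a b, IntervalIntegrable g volume a x := fun x hx =>
    hg.mono_set (uIcc_subset_uIcc left_mem_uIcc (mem_uIcc_of_le hx.1 hx.2))
  rw [heq τ hτ, heq c hc, ← integral_interval_sub_left (hint τ hτ) (hint c hc)]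
  ring

theorem nonneg_of_eq_add_integral_of_mul_le {M : ℝ} (hab : a ≤ b) (hM : 0 ≤ M)
    (hf : ContinuousOn f (Icc a b)) (hg : IntervalIntegrable g volume a b)
    (heq : ∀ τ ∈ Icc a b, f τ = f a + ∫ σ in a..τ, g σ)
    (hfg : ∀ σ ∈ Ioc a b, M * f σ ≤ g σ) (h0 : 0 ≤ f a) :
    ∀ τ ∈ Icc a b, 0 ≤ f τ := by
  set Ψ : ℝ → ℝ := fun τ => ∫ σ in a..τ, -f σ
  have hf_int : IntervalIntegrable f volume a b := hf.intervalIntegrable_of_Icc hab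
  have hsub : ∀ τ ∈ Icc a b, uIcc a τ ⊆ uIcc a b := fun τ hτ =>
    uIcc_subset_uIcc left_mem_uIcc (mem_uIcc_of_le hτ.1 hτ.2)
  have hkey : ∀ τ ∈ Icc a b, -f τ ≤ M * Ψ τ := by
    intro τ hτ
    have hmono : ∫ σ in a..τ, M * f σ ≤ ∫ σ in a..τ, g σ :=
      integral_mono_on_of_le_Ioo hτ.1 ((hf_int.mono_set (hsub τ hτ)).const_mul M)
        (hg.mono_set (hsub τ hτ)) fun σ hσ => hfg σ ⟨hσ.1, hσ.2.le.trans hτ.2⟩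
    rw [intervalIntegral.integral_const_mul] at hmono
    simp only [Ψ, intervalIntegral.integral_neg]
    linarith [heq τ hτ]
  have hΨ_deriv : ∀ x ∈ Ico a b, HasDerivWithinAt Ψ (-f x) (Ici x) x := by
    intro x hx
    have hnhds : Icc a b ∈ nhdsWithin x (Ioi x) :=
      mem_nhdsWithin.2 ⟨Iio b, isOpen_Iio, hx.2, fun y hy => ⟨hx.1.trans hy.2.le, hy.1.le⟩⟩
    exact integral_hasDerivWithinAt_right (hf_int.neg.mono_set (hsub x ⟨hx.1, hx.2.le⟩))
      ⟨Icc a b, hnhds, hf.neg.aestronglyMeasurable measurableSet_Icc⟩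
      ((hf x ⟨hx.1, hx.2.le⟩).neg.mono_of_mem_nhdsWithin hnhds)
  have hΨ_nonpos : ∀ τ ∈ Icc a b, Ψ τ ≤ 0 := by
    intro τ hτ
    simpa only [gronwallBound_ε0_δ0] using
      le_gronwallBound_of_liminf_deriv_right_le (δ := 0) (ε := 0)
        (uIcc_of_le hab ▸ continuousOn_primitive_interval' hf_int.neg left_mem_uIcc)
        (fun x hx _ hr => (hΨ_deriv x hx).liminf_right_slope_le hr) (by simp [Ψ])
        (fun x hx => by simpa using hkey x ⟨hx.1, hx.2.le⟩) τ hτ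
  intro τ hτ
  linarith [hkey τ hτ, mul_nonpos_of_nonneg_of_nonpos hM (hΨ_nonpos τ hτ)]

theorem nonneg_of_eq_add_integral_of_mul_le_of_nonpos {M : ℝ} (hM : 0 ≤ M)
    (hf : ContinuousOn f (Icc a b)) (hg : IntervalIntegrable g volume a b)
    (heq : ∀ τ ∈ Icc a b, f τ = f a + ∫ σ in a..τ, g σ)
    (hfg : ∀ σ ∈ Icc a b, f σ ≤ 0 → M * f σ ≤ g σ) (h0 : 0 ≤ f a) :
    ∀ τ ∈ Icc a b, 0 ≤ f τ := by
  intro τ hτ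
  by_contra! hfτ
  set K := Icc a τ ∩ f ⁻¹' Ici 0
  have hK_bdd : BddAbove K := ⟨τ, fun t ht => ht.1.2⟩
  have hK_closed : IsClosed K :=
    (hf.mono (Icc_subset_Icc le_rfl hτ.2)).preimage_isClosed_of_isClosed isClosed_Icc isClosed_Ici
  set t₁ := sSup K
  have ht₁ : t₁ ∈ K := hK_closed.csSup_mem ⟨a, ⟨le_rfl, hτ.1⟩, h0⟩ hK_bdd
  have hneg : ∀ t ∈ Ioc t₁ τ, f t < 0 := fun t ht => by
    by_contra! h
    exact (le_csSup hK_bdd ⟨⟨ht₁.1.1.trans ht.1.le, ht.2⟩, h⟩).not_gt ht.1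
  have hsub : Icc t₁ τ ⊆ Icc a b := Icc_subset_Icc ht₁.1.1 hτ.2
  have := nonneg_of_eq_add_integral_of_mul_le ht₁.1.2 hM (hf.mono hsub)
    (hg.mono_set (uIcc_subset_uIcc (mem_uIcc_of_le ht₁.1.1 (ht₁.1.2.trans hτ.2))
      (mem_uIcc_of_le hτ.1 hτ.2)))
    (fun x hx => eq_add_integral_of_mem_Icc hg heq (hsub ⟨le_rfl, ht₁.1.2⟩) (hsub hx))
    (fun σ hσ => hfg σ (hsub (Ioc_subset_Icc_self hσ)) (hneg σ hσ).le) ht₁.2 τ ⟨ht₁.1.2, le_rfl⟩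
  linarith

theorem nonneg_of_eq_add_integral_of_bddAbove_mul_le {c : ℝ → ℝ}
    (hf : ContinuousOn f (Icc a b)) (hg : IntervalIntegrable g volume a b)
    (heq : ∀ τ ∈ Icc a b, f τ = f a + ∫ σ in a..τ, g σ)
    (hc : BddAbove (c '' Icc a b)) (hcg : ∀ σ ∈ Icc a b, c σ * f σ ≤ g σ) (h0 : 0 ≤ f a) :
    ∀ τ ∈ Icc a b, 0 ≤ f τ := by
  obtain ⟨M, hM⟩ := hc
  refine nonneg_of_eq_add_integral_of_mul_le_of_nonpos (le_max_right M 0) hf hg heq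
    (fun σ hσ hfσ => ?_) h0
  exact (mul_le_mul_of_nonpos_right ((hM (mem_image_of_mem c hσ)).trans (le_max_left M 0))
    hfσ).trans (hcg σ hσ)

end IntegralForm

theorem bddAbove_image_comp_of_mapsTo {α X : Type*} [TopologicalSpace X] {K : Set X}
    {F : X → ℝ} {φ : α → X} {I : Set α} (hK : IsCompact K) (hF : ContinuousOn F K)
    (hφ : MapsTo φ I K) : BddAbove ((fun x => F (φ x)) '' I) := by
  simpa only [image_image] using (hK.bddAbove_image hF).mono (image_mono hφ.image_subset)

theorem simplex_invariance_general
    (T d_D d_T r_R : ℝ) (hdT : 0 ≤ d_T)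
    (u : ℝ → ℝ) (hu01 : ∀ τ ∈ Icc (0:ℝ) T, u τ ∈ Icc (0:ℝ) 1)
    (s r : ℝ → ℝ)
    (hs_cont : ContinuousOn s (Icc 0 T)) (hr_cont : ContinuousOn r (Icc 0 T))
    (hs_int : IntervalIntegrable
      (fun σ => (1 - s σ - r σ) * (1 - d_D * u σ) * s σ - d_T * s σ) volume 0 T)
    (hr_int : IntervalIntegrable
      (fun σ => r_R * (1 - s σ - r σ) * r σ - d_T * r σ) volume 0 T)
    (hs_eq : ∀ τ ∈ Icc (0:ℝ) T, s τ = s 0 +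
      ∫ σ in (0:ℝ)..τ, ((1 - s σ - r σ) * (1 - d_D * u σ) * s σ - d_T * s σ))
    (hr_eq : ∀ τ ∈ Icc (0:ℝ) T, r τ = r 0 +
      ∫ σ in (0:ℝ)..τ, (r_R * (1 - s σ - r σ) * r σ - d_T * r σ))
    (hx0 : (s 0, r 0) ∈ simplexΔ) :
    ∀ τ ∈ Icc (0:ℝ) T, (s τ, r τ) ∈ simplexΔ := by
  obtain ⟨hs0, hr0, hsr0⟩ : 0 ≤ s 0 ∧ 0 ≤ r 0 ∧ s 0 + r 0 ≤ 1 := hx0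
  have hbdd : ∀ F : (ℝ × ℝ) × ℝ → ℝ, Continuous F →
      BddAbove ((fun σ => F ((s σ, r σ), u σ)) '' Icc 0 T) := fun F hF =>
    bddAbove_image_comp_of_mapsTo
      ((isCompact_Icc.image_of_continuousOn (hs_cont.prodMk hr_cont)).prod isCompact_Icc)
      hF.continuousOn fun σ hσ => ⟨mem_image_of_mem _ hσ, hu01 σ hσ⟩
  have hs := nonneg_of_eq_add_integral_of_bddAbove_mul_le hs_cont hs_int hs_eq
    (hbdd (fun p => (1 - p.1.1 - p.1.2) * (1 - d_D * p.2) - d_T) (by fun_prop))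
    (fun σ _ => le_of_eq (by ring)) hs0
  have hr := nonneg_of_eq_add_integral_of_bddAbove_mul_le hr_cont hr_int hr_eq
    (hbdd (fun p => r_R * (1 - p.1.1 - p.1.2) - d_T) (by fun_prop))
    (fun σ _ => le_of_eq (by ring)) hr0
  have hw_eq : ∀ τ ∈ Icc (0:ℝ) T, 1 - s τ - r τ = 1 - s 0 - r 0 +
      ∫ σ in (0:ℝ)..τ, -(((1 - s σ - r σ) * (1 - d_D * u σ) * s σ - d_T * s σ) +
        (r_R * (1 - s σ - r σ) * r σ - d_T * r σ)) := by
    intro τ hτ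
    have hsub : uIcc 0 τ ⊆ uIcc 0 T :=
      uIcc_subset_uIcc left_mem_uIcc (mem_uIcc_of_le hτ.1 hτ.2)
    rw [intervalIntegral.integral_neg,
      intervalIntegral.integral_add (hs_int.mono_set hsub) (hr_int.mono_set hsub)]
    linarith [hs_eq τ hτ, hr_eq τ hτ]
  have hw := nonneg_of_eq_add_integral_of_bddAbove_mul_le (f := fun τ => 1 - s τ - r τ)
    ((continuousOn_const.sub hs_cont).sub hr_cont) (hs_int.add hr_int).neg hw_eq
    (hbdd (fun p => -((1 - d_D * p.2) * p.1.1 + r_R * p.1.2)) (by fun_prop))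
    (fun σ hσ => by
      simp only [Pi.neg_apply]
      linear_combination mul_nonneg hdT (add_nonneg (hs σ hσ) (hr σ hσ)))
    (by linarith)
  exact fun τ hτ => ⟨hs τ hτ, hr τ hτ, show s τ + r τ ≤ 1 by linarith [hw τ hτ]⟩

/-- **Invariance of the simplex Δ** for the controlled Lotka–Volterra system.
If the absolutely continuous trajectory `x = (s, r)` (written in integral form) starts in `Δ`,
it remains in `Δ` on the whole `[0,T]`. -/
theorem simplex_invariance
    (T d_D d_T r_R : ℝ) (hT : 0 < T) (hdD : 0 ≤ d_D) (hdT : 0 ≤ d_T) (hrR : 0 ≤ r_R)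
    (u : ℝ → ℝ) (hu_meas : Measurable u) (hu01 : ∀ τ ∈ Icc (0:ℝ) T, u τ ∈ Icc (0:ℝ) 1)
    (s r : ℝ → ℝ)
    (hs_cont : ContinuousOn s (Icc 0 T)) (hr_cont : ContinuousOn r (Icc 0 T))
    (hs_int : IntervalIntegrable
      (fun σ => (1 - s σ - r σ) * (1 - d_D * u σ) * s σ - d_T * s σ) volume 0 T)
    (hr_int : IntervalIntegrable
      (fun σ => r_R * (1 - s σ - r σ) * r σ - d_T * r σ) volume 0 T)
    (hs_eq : ∀ τ ∈ Icc (0:ℝ) T, s τ = s 0 +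
      ∫ σ in (0:ℝ)..τ, ((1 - s σ - r σ) * (1 - d_D * u σ) * s σ - d_T * s σ))
    (hr_eq : ∀ τ ∈ Icc (0:ℝ) T, r τ = r 0 +
      ∫ σ in (0:ℝ)..τ, (r_R * (1 - s σ - r σ) * r σ - d_T * r σ))
    (hx0 : (s 0, r 0) ∈ simplexΔ) :
    ∀ τ ∈ Icc (0:ℝ) T, (s τ, r τ) ∈ simplexΔ :=
  simplex_invariance_general T d_D d_T r_R hdT u hu01 s r hs_cont hr_cont hs_int hr_int hs_eq hr_eq
    hx0
end

section
/- Let T > 0, let d_D, d_T, r_R ≥ 0, and let u : [0,T] → [0,1] be measurable. If x = (s, r) is a trajectory of the controlled Lotka–Volterra system with r(0) = 0 and s(0) ∈ [0,1], then r(τ) = 0 and s(τ) ∈ [0,1] for every τ ∈ [0,T] (the boundary segment Δ₂ := {(x₁,x₂) ∈ Δ : x₂ = 0} is invariant). -/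
/-!
Because `u` is only measurable, the argument works with the integral equations throughout.
The basic tool is a barrier principle: if `f = f a + ∫ F` starts `≤ 0` and `F ≤ M f` wherever
`f ≥ 0`, then on an excursion of `f` above `0`, started at its last zero, `f ≤ M ∫ f`, and
Grönwall's inequality (applied to the primitive of `f`) forces `f = 0`. The `r`-equation is
`r' = c r` with `c` bounded above, so `r` and `-r` both stay nonnegative and `r ≡ 0`. The
`s`-equation is `s' = c s` as well, which keeps `s ≥ 0`. Once `r = 0`, the growth term
`(1 - s)(1 - d_D u) s` vanishes at `s = 1` and is `≤ M (s - 1)` above it, while `-d_T s ≤ 0`,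
so `s - 1` obeys the barrier principle too.
-/

open MeasureTheory Set

theorem mul_le_mul_of_abs_le_of_abs_le {x y X Y : ℝ} (hx : |x| ≤ X) (hy : |y| ≤ Y) :
    x * y ≤ X * Y :=
  (le_abs_self _).trans <| (abs_mul x y).trans_le <|
    mul_le_mul hx hy (abs_nonneg y) ((abs_nonneg x).trans hx)

theorem eq_zero_of_le_mul_integral {f : ℝ → ℝ} {a b M : ℝ} (hf : ContinuousOn f (Icc a b))
    (hf_nonneg : ∀ τ ∈ Icc a b, 0 ≤ f τ) (hle : ∀ τ ∈ Icc a b, f τ ≤ M * ∫ σ in a..τ, f σ) :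
    ∀ τ ∈ Icc a b, f τ = 0 := by
  set φ : ℝ → ℝ := fun τ => ∫ σ in a..τ, f σ
  have hφ_nonneg : ∀ τ ∈ Icc a b, 0 ≤ φ τ := fun τ hτ =>
    intervalIntegral.integral_nonneg hτ.1 fun σ hσ => hf_nonneg σ ⟨hσ.1, hσ.2.trans hτ.2⟩
  have hφ_deriv : ∀ τ ∈ Icc a b, HasDerivWithinAt φ (f τ) (Icc a b) τ := by
    intro τ hτ
    have : Fact (τ ∈ Icc a b) := ⟨hτ⟩
    exact intervalIntegral.integral_hasDerivWithinAt_right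
      (hf.mono (uIcc_subset_Icc (left_mem_Icc.2 (hτ.1.trans hτ.2)) hτ)).intervalIntegrable
      (hf.stronglyMeasurableAtFilter_nhdsWithin measurableSet_Icc τ) (hf τ hτ)
  have hφ_zero : ∀ τ ∈ Icc a b, φ τ = 0 :=
    eq_zero_of_abs_deriv_le_mul_abs_self_of_eq_zero_right (K := M)
      (fun τ hτ => (hφ_deriv τ hτ).continuousWithinAt)
      (fun τ hτ => (hφ_deriv τ (Ico_subset_Icc_self hτ)).mono_of_mem_nhdsWithin
        (Icc_mem_nhdsGE_of_mem hτ))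
      (by simp [φ])
      (fun τ hτ => by
        have hτ' := Ico_subset_Icc_self hτ
        rw [Real.norm_of_nonneg (hf_nonneg τ hτ'), Real.norm_of_nonneg (hφ_nonneg τ hτ')]
        exact hle τ hτ')
  intro τ hτ
  have hle' : f τ ≤ M * φ τ := hle τ hτ
  rw [hφ_zero τ hτ, mul_zero] at hle'
  exact le_antisymm hle' (hf_nonneg τ hτ)

theorem ContinuousOn.exists_eq_zero_forall_nonneg_Icc {g : ℝ → ℝ} {a b : ℝ} (hab : a ≤ b)
    (hg : ContinuousOn g (Icc a b)) (ha : g a ≤ 0) (hb : 0 ≤ g b) :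
    ∃ c ∈ Icc a b, g c = 0 ∧ ∀ t ∈ Icc c b, 0 ≤ g t := by
  set S := Icc a b ∩ g ⁻¹' Iic 0
  have hS_bdd : BddAbove S := ⟨b, fun t ht => ht.1.2⟩
  have hcS : sSup S ∈ S := (hg.preimage_isClosed_of_isClosed isClosed_Icc isClosed_Iic).csSup_mem
    ⟨a, left_mem_Icc.2 hab, ha⟩ hS_bdd
  have hlast : ∀ t ∈ Icc (sSup S) b, g t ≤ 0 → t = sSup S := fun t ht hgt =>
    le_antisymm (le_csSup hS_bdd ⟨⟨hcS.1.1.trans ht.1, ht.2⟩, hgt⟩) ht.1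
  have hzero : g (sSup S) = 0 := by
    obtain ⟨t, ht, hgt⟩ := intermediate_value_Icc hcS.1.2 (hg.mono (Icc_subset_Icc_left hcS.1.1))
      ⟨hcS.2, hb⟩
    exact hlast t ht hgt.le ▸ hgt
  refine ⟨sSup S, hcS.1, hzero, fun t ht => ?_⟩
  by_contra! hneg
  exact hneg.ne (hlast t ht hneg.le ▸ hzero)

theorem nonpos_of_integral_eq {f F : ℝ → ℝ} {a b M : ℝ} (hf : ContinuousOn f (Icc a b))
    (hF : IntervalIntegrable F volume a b)
    (heq : ∀ τ ∈ Icc a b, f τ = f a + ∫ σ in a..τ, F σ) (ha : f a ≤ 0)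
    (hFM : ∀ σ ∈ Icc a b, 0 ≤ f σ → F σ ≤ M * f σ) :
    ∀ τ ∈ Icc a b, f τ ≤ 0 := by
  intro τ₀ hτ₀
  by_contra! hpos
  obtain ⟨c, hc, hc_zero, hc_nonneg⟩ :=
    (hf.mono (Icc_subset_Icc_right hτ₀.2)).exists_eq_zero_forall_nonneg_Icc hτ₀.1 ha hpos.le
  have hsub : Icc c τ₀ ⊆ Icc a b := Icc_subset_Icc hc.1 hτ₀.2
  have hcab : c ∈ Icc a b := ⟨hc.1, hc.2.trans hτ₀.2⟩
  have ha_mem : a ∈ Icc a b := left_mem_Icc.2 (hτ₀.1.trans hτ₀.2)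
  have hF_sub : ∀ x ∈ Icc a b, ∀ y ∈ Icc a b, IntervalIntegrable F volume x y := fun x hx y hy =>
    hF.mono_set (uIcc_subset_uIcc (Icc_subset_uIcc hx) (Icc_subset_uIcc hy))
  have hgronwall : ∀ τ ∈ Icc c τ₀, f τ ≤ M * ∫ σ in c..τ, f σ := by
    intro τ hτ
    have hf_eq : f τ = ∫ σ in c..τ, F σ := by
      rw [← intervalIntegral.integral_interval_sub_left (hF_sub a ha_mem τ (hsub hτ))
        (hF_sub a ha_mem c hcab)]
      linarith [heq τ (hsub hτ), heq c hcab]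
    rw [hf_eq, ← intervalIntegral.integral_const_mul]
    exact intervalIntegral.integral_mono_on hτ.1 (hF_sub c hcab τ (hsub hτ))
      (ContinuousOn.intervalIntegrable_of_Icc hτ.1
        (continuousOn_const.mul (hf.mono ((Icc_subset_Icc_right hτ.2).trans hsub))))
      fun σ hσ =>
        have hσ' : σ ∈ Icc c τ₀ := ⟨hσ.1, hσ.2.trans hτ.2⟩
        hFM σ (hsub hσ') (hc_nonneg σ hσ')
  exact hpos.ne' (eq_zero_of_le_mul_integral (hf.mono hsub) hc_nonneg hgronwall τ₀ ⟨hc.2, le_rfl⟩)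

theorem nonneg_of_integral_eq_mul {f F c : ℝ → ℝ} {a b M : ℝ} (hf : ContinuousOn f (Icc a b))
    (hF : IntervalIntegrable F volume a b)
    (heq : ∀ τ ∈ Icc a b, f τ = f a + ∫ σ in a..τ, F σ) (ha : 0 ≤ f a)
    (hFc : ∀ σ ∈ Icc a b, F σ = c σ * f σ) (hcM : ∀ σ ∈ Icc a b, c σ ≤ M) :
    ∀ τ ∈ Icc a b, 0 ≤ f τ := by
  have := nonpos_of_integral_eq (f := fun τ => -f τ) (F := fun σ => -F σ) (M := M) hf.neg hF.neg
    (fun τ hτ => by rw [intervalIntegral.integral_neg, heq τ hτ]; ring) (neg_nonpos.2 ha)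
    (fun σ hσ hσ_nonneg => by
      rw [hFc σ hσ, ← mul_neg]
      exact mul_le_mul_of_nonneg_right (hcM σ hσ) hσ_nonneg)
  exact fun τ hτ => neg_nonpos.1 (this τ hτ)

theorem eq_zero_of_integral_eq_mul {f F c : ℝ → ℝ} {a b M : ℝ} (hf : ContinuousOn f (Icc a b))
    (hF : IntervalIntegrable F volume a b)
    (heq : ∀ τ ∈ Icc a b, f τ = f a + ∫ σ in a..τ, F σ) (ha : f a = 0)
    (hFc : ∀ σ ∈ Icc a b, F σ = c σ * f σ) (hcM : ∀ σ ∈ Icc a b, c σ ≤ M) :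
    ∀ τ ∈ Icc a b, f τ = 0 := by
  have hnonneg := nonneg_of_integral_eq_mul hf hF heq ha.ge hFc hcM
  have hnonpos := nonneg_of_integral_eq_mul (f := fun τ => -f τ) (F := fun σ => -F σ) hf.neg hF.neg
    (fun τ hτ => by rw [intervalIntegral.integral_neg, heq τ hτ]; ring) (by simp [ha])
    (fun σ hσ => by rw [hFc σ hσ]; ring) hcM
  exact fun τ hτ => le_antisymm (neg_nonneg.1 (hnonpos τ hτ)) (hnonneg τ hτ)

theorem segmentDelta2_invariance_general
    (T d_D d_T r_R : ℝ) (hdT : 0 ≤ d_T)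
    (u : ℝ → ℝ) (hu01 : ∀ τ ∈ Icc (0:ℝ) T, u τ ∈ Icc (0:ℝ) 1)
    (s r : ℝ → ℝ)
    (hs_cont : ContinuousOn s (Icc 0 T)) (hr_cont : ContinuousOn r (Icc 0 T))
    (hs_int : IntervalIntegrable
      (fun σ => (1 - s σ - r σ) * (1 - d_D * u σ) * s σ - d_T * s σ) volume 0 T)
    (hr_int : IntervalIntegrable
      (fun σ => r_R * (1 - s σ - r σ) * r σ - d_T * r σ) volume 0 T)
    (hs_eq : ∀ τ ∈ Icc (0:ℝ) T, s τ = s 0 +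
      ∫ σ in (0:ℝ)..τ, ((1 - s σ - r σ) * (1 - d_D * u σ) * s σ - d_T * s σ))
    (hr_eq : ∀ τ ∈ Icc (0:ℝ) T, r τ = r 0 +
      ∫ σ in (0:ℝ)..τ, (r_R * (1 - s σ - r σ) * r σ - d_T * r σ))
    (hr0 : r 0 = 0) (hs0 : s 0 ∈ Icc (0:ℝ) 1) :
    ∀ τ ∈ Icc (0:ℝ) T, r τ = 0 ∧ s τ ∈ Icc (0:ℝ) 1 := by
  obtain ⟨C, hC⟩ : ∃ C, ∀ σ ∈ Icc (0:ℝ) T, |1 - s σ - r σ| ≤ C :=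
    isCompact_Icc.exists_bound_of_continuousOn ((continuousOn_const.sub hs_cont).sub hr_cont)
  have hu_coef : ∀ σ ∈ Icc (0:ℝ) T, |1 - d_D * u σ| ≤ 1 + |d_D| := fun σ hσ => by
    have hu : |u σ| ≤ 1 := abs_le.2 ⟨by linarith [(hu01 σ hσ).1], (hu01 σ hσ).2⟩
    calc |1 - d_D * u σ| ≤ |1| + |d_D| * |u σ| := (abs_sub _ _).trans_eq (by rw [abs_mul])
      _ ≤ 1 + |d_D| := by rw [abs_one]; linarith [mul_le_of_le_one_right (abs_nonneg d_D) hu]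
  have hr_zero : ∀ τ ∈ Icc (0:ℝ) T, r τ = 0 :=
    eq_zero_of_integral_eq_mul (c := fun σ => r_R * (1 - s σ - r σ) - d_T) (M := |r_R| * C)
      hr_cont hr_int hr_eq hr0 (fun σ _ => by ring) fun σ hσ => by
        linarith [mul_le_mul_of_abs_le_of_abs_le (le_refl |r_R|) (hC σ hσ)]
  have hs_nonneg : ∀ τ ∈ Icc (0:ℝ) T, 0 ≤ s τ :=
    nonneg_of_integral_eq_mul (c := fun σ => (1 - s σ - r σ) * (1 - d_D * u σ) - d_T)
      (M := C * (1 + |d_D|)) hs_cont hs_int hs_eq hs0.1 (fun σ _ => by ring) fun σ hσ => by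
        linarith [mul_le_mul_of_abs_le_of_abs_le (hC σ hσ) (hu_coef σ hσ)]
  have hs_le_one : ∀ τ ∈ Icc (0:ℝ) T, s τ - 1 ≤ 0 :=
    nonpos_of_integral_eq (M := (1 + |d_D|) * (1 + C)) (hs_cont.sub continuousOn_const) hs_int
      (fun τ hτ => by linarith [hs_eq τ hτ]) (by linarith [hs0.2]) fun σ hσ hs1 => by
        have hs_abs : |s σ| ≤ 1 + C := by
          rw [abs_of_nonneg (by linarith)]
          linarith [(abs_le.1 (hC σ hσ)).1, hr_zero σ hσ]
        have hgrowth := mul_le_mul_of_abs_le_of_abs_le ((abs_neg _).trans_le (hu_coef σ hσ)) hs_abs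
        rw [hr_zero σ hσ]
        nlinarith [mul_le_mul_of_nonneg_left hgrowth hs1, mul_nonneg hdT (by linarith : 0 ≤ s σ)]
  exact fun τ hτ => ⟨hr_zero τ hτ, hs_nonneg τ hτ, sub_nonpos.1 (hs_le_one τ hτ)⟩

/-- **Invariance of the boundary segment `Δ₂ = {(x₁,x₂) ∈ Δ : x₂ = 0}`** for the controlled
Lotka–Volterra system: if the absolutely continuous trajectory `x = (s, r)` (written in
integral form) starts with `r(0) = 0` and `s(0) ∈ [0,1]`, then `r(τ) = 0` and `s(τ) ∈ [0,1]`
on the whole `[0,T]`. -/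
theorem segmentDelta2_invariance
    (T d_D d_T r_R : ℝ) (hT : 0 < T) (hdD : 0 ≤ d_D) (hdT : 0 ≤ d_T) (hrR : 0 ≤ r_R)
    (u : ℝ → ℝ) (hu_meas : Measurable u) (hu01 : ∀ τ ∈ Icc (0:ℝ) T, u τ ∈ Icc (0:ℝ) 1)
    (s r : ℝ → ℝ)
    (hs_cont : ContinuousOn s (Icc 0 T)) (hr_cont : ContinuousOn r (Icc 0 T))
    (hs_int : IntervalIntegrable
      (fun σ => (1 - s σ - r σ) * (1 - d_D * u σ) * s σ - d_T * s σ) volume 0 T)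
    (hr_int : IntervalIntegrable
      (fun σ => r_R * (1 - s σ - r σ) * r σ - d_T * r σ) volume 0 T)
    (hs_eq : ∀ τ ∈ Icc (0:ℝ) T, s τ = s 0 +
      ∫ σ in (0:ℝ)..τ, ((1 - s σ - r σ) * (1 - d_D * u σ) * s σ - d_T * s σ))
    (hr_eq : ∀ τ ∈ Icc (0:ℝ) T, r τ = r 0 +
      ∫ σ in (0:ℝ)..τ, (r_R * (1 - s σ - r σ) * r σ - d_T * r σ))
    (hr0 : r 0 = 0) (hs0 : s 0 ∈ Icc (0:ℝ) 1) :
    ∀ τ ∈ Icc (0:ℝ) T, r τ = 0 ∧ s τ ∈ Icc (0:ℝ) 1 :=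
  segmentDelta2_invariance_general T d_D d_T r_R hdT u hu01 s r hs_cont hr_cont hs_int hr_int hs_eq
    hr_eq hr0 hs0
end

section
/- Let u ∈ U and θ = (d_D, d_T, r_R, f₀) with d_D, d_T, r_R ≥ 0 and f₀ ∈ [0,1], and let x_u^θ be the unique absolutely continuous solution on [0,T] of the truncated control system with control u and initial datum x_u^θ(0) = ((1 − f₀)n₀, f₀ n₀) ∈ Δ, where n₀ ∈ (0,1). Then x_u^θ(τ) ∈ Δ for every τ ∈ [0,T], and x_u^θ also satisfies the untruncated control-affine system x'(τ) = F̃₀^θ(x(τ)) + F̃₁^θ(x(τ)) u(τ) for a.e. τ ∈ [0,T]; consequently ∫₀^T ℓ(s_u^θ(τ) + r_u^θ(τ)) dτ computed from the truncated dynamics equals the same integral computed from the untruncated dynamics (J(u) = J'(u)). -/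
open MeasureTheory Set Filter Topology

noncomputable section

/-- The untruncated drift `F̃₀^θ` of the Lotka–Volterra system, for
`θ = (d_D, d_T, r_R, f₀)`. -/
def Ft0 (θ : ℝ × ℝ × ℝ × ℝ) (x : ℝ × ℝ) : ℝ × ℝ :=
  ((1 - x.1 - x.2) * x.1 - θ.2.1 * x.1,
    θ.2.2.1 * (1 - x.1 - x.2) * x.2 - θ.2.1 * x.2)

/-- The untruncated controlled field `F̃₁^θ`, for `θ = (d_D, d_T, r_R, f₀)`. -/
def Ft1 (θ : ℝ × ℝ × ℝ × ℝ) (x : ℝ × ℝ) : ℝ × ℝ :=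
  (-θ.1 * ((1 - x.1 - x.2) * x.1), 0)

/-- `ρ` is a smooth cut-off with `ρ ≡ 1` on `B₂(0)`, `supp ρ ⊂ B₃(0)`, `0 ≤ ρ ≤ 1`. -/
def IsCutoff (ρ : ℝ × ℝ → ℝ) : Prop :=
  ContDiff ℝ (⊤ : ℕ∞) ρ ∧ (∀ x, ρ x ∈ Icc (0:ℝ) 1) ∧
    (∀ x ∈ Metric.ball (0 : ℝ × ℝ) 2, ρ x = 1) ∧
    tsupport ρ ⊆ Metric.ball (0 : ℝ × ℝ) 3

/-- Truncation of a vector field by the cut-off `ρ`. -/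
def trunc (ρ : ℝ × ℝ → ℝ) (F : ℝ × ℝ → ℝ × ℝ) : ℝ × ℝ → ℝ × ℝ := fun x => ρ x • F x

/-- `x` is an absolutely continuous (Carathéodory) solution on `[0,T]` of the control-affine
system `x' = F(x) + u·G(x)`, written in integral form. -/
def IsSol (T : ℝ) (F G : ℝ × ℝ → ℝ × ℝ) (u : ℝ → ℝ) (x : ℝ → ℝ × ℝ) : Prop :=
  ContinuousOn x (Icc 0 T) ∧
    IntervalIntegrable (fun σ => F (x σ) + u σ • G (x σ)) volume 0 T ∧
    ∀ τ ∈ Icc (0:ℝ) T, x τ = x 0 + ∫ σ in (0:ℝ)..τ, (F (x σ) + u σ • G (x σ))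

/-- The reference measure: Lebesgue measure restricted to `[0,T]`. -/
def muT (T : ℝ) : Measure ℝ := volume.restrict (Icc 0 T)

/-- Membership in the set of admissible controls
`U = {u ∈ L²([0,T]) : 0 ≤ u ≤ 1 a.e.}`. -/
def InU (T : ℝ) (u : ℝ → ℝ) : Prop :=
  MemLp u 2 (muT T) ∧ ∀ᵐ τ ∂(muT T), u τ ∈ Icc (0:ℝ) 1

end

lemma my_gron (T K : ℝ) (hK : 0 ≤ K) (φ : ℝ → ℝ)
    (hc : ContinuousOn φ (Icc 0 T)) (hpos : ∀ τ ∈ Icc (0:ℝ) T, 0 ≤ φ τ)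
    (hineq : ∀ τ ∈ Icc (0:ℝ) T, φ τ ≤ K * ∫ σ in (0:ℝ)..τ, φ σ) :
    ∀ τ ∈ Icc (0:ℝ) T, φ τ = 0 := by
  obtain ⟨M, hM⟩ := isCompact_Icc.exists_bound_of_continuousOn hc
  have hM' : ∀ τ ∈ Icc (0:ℝ) T, φ τ ≤ M := fun τ hτ =>
    (le_abs_self _).trans (by simpa using hM τ hτ)
  have key : ∀ n : ℕ, ∀ τ ∈ Icc (0:ℝ) T, φ τ ≤ M * (K ^ n * τ ^ n / n.factorial) := by
    intro n
    induction n with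
    | zero => intro τ hτ; simpa using hM' τ hτ
    | succ n ih =>
      intro τ hτ
      obtain ⟨hτ0, hτT⟩ := hτ
      have hsub : Icc (0:ℝ) τ ⊆ Icc 0 T := Icc_subset_Icc le_rfl hτT
      have hφint : IntervalIntegrable φ volume 0 τ := by
        apply ContinuousOn.intervalIntegrable
        rw [uIcc_of_le hτ0]; exact hc.mono hsub
      have hgint : IntervalIntegrable (fun σ => M * (K ^ n * σ ^ n / n.factorial)) volume 0 τ :=
        (Continuous.intervalIntegrable (by continuity) 0 τ)
      have hmono := intervalIntegral.integral_mono_on hτ0 hφint hgint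
        (fun σ hσ => ih σ (hsub hσ))
      have hcalc : ∫ σ in (0:ℝ)..τ, M * (K ^ n * σ ^ n / n.factorial)
          = M * (K ^ n * (τ ^ (n+1) / (n+1)) / n.factorial) := by
        rw [intervalIntegral.integral_const_mul]
        congr 1
        rw [show (fun σ : ℝ => K ^ n * σ ^ n / (n.factorial : ℝ))
            = fun σ : ℝ => (K ^ n / n.factorial) * σ ^ n by funext σ; ring]
        rw [intervalIntegral.integral_const_mul, integral_pow]
        ring
      calc φ τ ≤ K * ∫ σ in (0:ℝ)..τ, φ σ := hineq τ ⟨hτ0, hτT⟩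
        _ ≤ K * ∫ σ in (0:ℝ)..τ, M * (K ^ n * σ ^ n / n.factorial) :=
            mul_le_mul_of_nonneg_left hmono hK
        _ = M * (K ^ (n+1) * τ ^ (n+1) / (n+1).factorial) := by
            rw [hcalc, Nat.factorial_succ]
            push_cast
            field_simp
            ring
  intro τ hτ
  refine le_antisymm ?_ (hpos τ hτ)
  have hlim : Tendsto (fun n : ℕ => M * (K ^ n * τ ^ n / n.factorial)) atTop (𝓝 0) := by
    have := FloorSemiring.tendsto_pow_div_factorial_atTop (K * τ)
    have h2 : Tendsto (fun n : ℕ => M * ((K*τ) ^ n / n.factorial)) atTop (𝓝 (M * 0)) :=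
      this.const_mul M
    simpa [mul_pow, mul_div_assoc] using h2
  exact ge_of_tendsto hlim (Eventually.of_forall fun n => key n τ hτ)


lemma my_nonneg (T K : ℝ) (hT : 0 ≤ T) (hK : 0 ≤ K) (v h : ℝ → ℝ)
    (hc : ContinuousOn v (Icc 0 T))
    (hint : IntervalIntegrable h volume 0 T)
    (heq : ∀ τ ∈ Icc (0:ℝ) T, v τ = v 0 + ∫ σ in (0:ℝ)..τ, h σ)
    (hv0 : 0 ≤ v 0)
    (hae : ∀ᵐ σ ∂(volume.restrict (Icc (0:ℝ) T)), v σ ≤ 0 → K * v σ ≤ h σ) :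
    ∀ τ ∈ Icc (0:ℝ) T, 0 ≤ v τ := by
  set φ : ℝ → ℝ := fun σ => max 0 (-v σ) with hφdef
  have hφc : ContinuousOn φ (Icc 0 T) := (continuous_const.max continuous_neg).comp_continuousOn hc
  have hφpos : ∀ τ ∈ Icc (0:ℝ) T, 0 ≤ φ τ := fun τ _ => le_max_left _ _
  have hφv : ∀ σ, -φ σ ≤ v σ := by
    intro σ; have := le_max_right 0 (-v σ); simp only [hφdef]; linarith
  have main : ∀ τ ∈ Icc (0:ℝ) T, φ τ ≤ K * ∫ σ in (0:ℝ)..τ, φ σ := by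
    intro τ hτ
    obtain ⟨hτ0, hτT⟩ := hτ
    have hsubT : Icc (0:ℝ) τ ⊆ Icc 0 T := Icc_subset_Icc le_rfl hτT
    have hφint : IntervalIntegrable φ volume 0 τ := by
      apply ContinuousOn.intervalIntegrable
      rw [uIcc_of_le hτ0]; exact hφc.mono hsubT
    have hφI : 0 ≤ ∫ σ in (0:ℝ)..τ, φ σ :=
      intervalIntegral.integral_nonneg hτ0 (fun σ _ => le_max_left _ _)
    by_cases hvτ : 0 ≤ v τ
    · have : φ τ = 0 := by simp [hφdef, max_eq_left, neg_nonpos.mpr hvτ]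
      rw [this]; positivity
    push_neg at hvτ
    -- first time before τ where v was nonneg
    set S : Set ℝ := {σ ∈ Icc (0:ℝ) τ | 0 ≤ v σ} with hSdef
    have hSne : S.Nonempty := ⟨0, ⟨le_rfl, hτ0⟩, hv0⟩
    have hSclosed : IsClosed S := by
      have := (hc.mono hsubT).preimage_isClosed_of_isClosed isClosed_Icc (isClosed_Ici (a := (0:ℝ)))
      exact this
    have hScompact : IsCompact S :=
      isCompact_Icc.of_isClosed_subset hSclosed (fun σ hσ => hσ.1)
    set σ₀ := sSup S with hσ₀def
    have hσ₀S : σ₀ ∈ S := hScompact.sSup_mem hSne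
    obtain ⟨⟨hσ₀0, hσ₀τ⟩, hvσ₀⟩ := hσ₀S
    have hneg : ∀ σ ∈ Ioc σ₀ τ, v σ < 0 := by
      intro σ hσ
      by_contra hcon
      push_neg at hcon
      have : σ ∈ S := ⟨⟨hσ₀0.trans hσ.1.le, hσ.2⟩, hcon⟩
      exact absurd (le_csSup hScompact.bddAbove this) (not_le.mpr hσ.1)
    -- integral identity between σ₀ and τ
    have hintτ : IntervalIntegrable h volume 0 τ :=
      hint.mono_set (by rw [uIcc_of_le hτ0, uIcc_of_le hT]; exact hsubT)
    have hintσ₀ : IntervalIntegrable h volume 0 σ₀ :=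
      hintτ.mono_set (by rw [uIcc_of_le hσ₀0, uIcc_of_le hτ0]; exact Icc_subset_Icc le_rfl hσ₀τ)
    have hintst : IntervalIntegrable h volume σ₀ τ :=
      hintτ.mono_set (by rw [uIcc_of_le hσ₀τ, uIcc_of_le hτ0]; exact Icc_subset_Icc hσ₀0 le_rfl)
    have hdiff : v τ - v σ₀ = ∫ σ in σ₀..τ, h σ := by
      rw [heq τ ⟨hτ0, hτT⟩, heq σ₀ ⟨hσ₀0, hσ₀τ.trans hτT⟩]
      rw [add_sub_add_left_eq_sub, intervalIntegral.integral_interval_sub_left hintτ hintσ₀]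
    -- a.e. lower bound of h by K * v on [σ₀, τ]
    have hsub2 : Icc σ₀ τ ⊆ Icc 0 T := Icc_subset_Icc hσ₀0 hτT
    have hae2 : ∀ᵐ σ ∂(volume.restrict (Icc σ₀ τ)), v σ ≤ 0 → K * v σ ≤ h σ :=
      ae_restrict_of_ae_restrict_of_subset hsub2 hae
    have hmem : ∀ᵐ σ ∂(volume.restrict (Icc σ₀ τ)), σ ∈ Icc σ₀ τ :=
      ae_restrict_mem measurableSet_Icc
    have hne : ∀ᵐ σ ∂(volume.restrict (Icc σ₀ τ)), σ ≠ σ₀ := by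
      have h0 : (volume.restrict (Icc σ₀ τ)) {σ₀} = 0 :=
        le_antisymm ((Measure.restrict_apply_le _ _).trans Real.volume_singleton.le) zero_le
      rw [ae_iff]
      simpa [not_not, Set.setOf_eq_eq_singleton] using h0
    have haeKv : (fun σ => K * v σ) ≤ᵐ[volume.restrict (Icc σ₀ τ)] h := by
      filter_upwards [hae2, hmem, hne] with σ h1 h2 h3
      exact h1 (le_of_lt (hneg σ ⟨lt_of_le_of_ne h2.1 (Ne.symm h3), h2.2⟩))
    have hvc : ContinuousOn v (Icc σ₀ τ) := hc.mono hsub2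
    have hvint : IntervalIntegrable v volume σ₀ τ := by
      apply ContinuousOn.intervalIntegrable
      rw [uIcc_of_le hσ₀τ]; exact hvc
    have hKvint : IntervalIntegrable (fun σ => K * v σ) volume σ₀ τ := hvint.const_mul K
    have hbound : K * ∫ σ in σ₀..τ, v σ ≤ ∫ σ in σ₀..τ, h σ := by
      rw [← intervalIntegral.integral_const_mul]
      exact intervalIntegral.integral_mono_ae_restrict hσ₀τ hKvint hintst haeKv
    -- ∫_{σ₀}^τ v ≥ -∫_0^τ φ
    have hφint2 : IntervalIntegrable φ volume σ₀ τ :=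
      hφint.mono_set (by rw [uIcc_of_le hσ₀τ, uIcc_of_le hτ0]; exact Icc_subset_Icc hσ₀0 le_rfl)
    have hφint1 : IntervalIntegrable φ volume 0 σ₀ :=
      hφint.mono_set (by rw [uIcc_of_le hσ₀0, uIcc_of_le hτ0]; exact Icc_subset_Icc le_rfl hσ₀τ)
    have h1 : -∫ σ in σ₀..τ, φ σ ≤ ∫ σ in σ₀..τ, v σ := by
      rw [← intervalIntegral.integral_neg]
      exact intervalIntegral.integral_mono_on hσ₀τ hφint2.neg hvint (fun σ _ => hφv σ)
    have h2 : ∫ σ in σ₀..τ, φ σ ≤ ∫ σ in (0:ℝ)..τ, φ σ := by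
      rw [← intervalIntegral.integral_add_adjacent_intervals hφint1 hφint2]
      have : 0 ≤ ∫ σ in (0:ℝ)..σ₀, φ σ :=
        intervalIntegral.integral_nonneg hσ₀0 (fun σ _ => le_max_left _ _)
      linarith
    have hφτ : φ τ = -v τ := by
      simp [hφdef, max_eq_right, neg_nonneg.mpr hvτ.le]
    -- combine
    rw [hφτ]
    have hcomb : v σ₀ + K * ∫ σ in σ₀..τ, v σ ≤ v τ := by linarith [hbound, hdiff.ge, hdiff.le]
    have h1' := mul_le_mul_of_nonneg_left h1 hK
    rw [mul_neg] at h1'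
    have h2' := mul_le_mul_of_nonneg_left h2 hK
    linarith
  have := my_gron T K hK φ hφc hφpos main
  intro τ hτ
  have hφ0 := this τ hτ
  have := hφv τ
  rw [hφ0] at this
  linarith

lemma quad_bound (R D a1 a2 b1 b2 : ℝ) (hR : 0 ≤ R)
    (ha1 : |a1| ≤ R) (ha2 : |a2| ≤ R) (hb1 : |b1| ≤ R) (hb2 : |b2| ≤ R)
    (hd1 : |a1 - b1| ≤ D) (hd2 : |a2 - b2| ≤ D) :
    |(1 - a1 - a2) * a1 - (1 - b1 - b2) * b1| ≤ (1 + 4 * R) * D := by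
  have hD : 0 ≤ D := (abs_nonneg _).trans hd1
  have key : (1 - a1 - a2) * a1 - (1 - b1 - b2) * b1
      = (a1 - b1) - (a1 + b1) * (a1 - b1) - a2 * (a1 - b1) - b1 * (a2 - b2) := by ring
  rw [key]
  have t1 : |(a1 + b1) * (a1 - b1)| ≤ 2 * R * D := by
    rw [abs_mul]
    exact mul_le_mul ((abs_add_le a1 b1).trans (by linarith)) hd1 (abs_nonneg _) (by positivity)
  have t2 : |a2 * (a1 - b1)| ≤ R * D := by
    rw [abs_mul]; exact mul_le_mul ha2 hd1 (abs_nonneg _) hR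
  have t3 : |b1 * (a2 - b2)| ≤ R * D := by
    rw [abs_mul]; exact mul_le_mul hb1 hd2 (abs_nonneg _) hR
  calc |(a1 - b1) - (a1 + b1) * (a1 - b1) - a2 * (a1 - b1) - b1 * (a2 - b2)|
      ≤ |(a1 - b1) - (a1 + b1) * (a1 - b1) - a2 * (a1 - b1)| + |b1 * (a2 - b2)| :=
        abs_sub _ _
    _ ≤ |(a1 - b1) - (a1 + b1) * (a1 - b1)| + |a2 * (a1 - b1)| + |b1 * (a2 - b2)| := by
        linarith [abs_sub ((a1 - b1) - (a1 + b1) * (a1 - b1)) (a2 * (a1 - b1))]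
    _ ≤ |a1 - b1| + |(a1 + b1) * (a1 - b1)| + |a2 * (a1 - b1)| + |b1 * (a2 - b2)| := by
        linarith [abs_sub (a1 - b1) ((a1 + b1) * (a1 - b1))]
    _ ≤ (1 + 4 * R) * D := by linarith

lemma lip_bound (θ : ℝ × ℝ × ℝ × ℝ) (hd : 0 ≤ θ.1) (ht : 0 ≤ θ.2.1) (hr : 0 ≤ θ.2.2.1)
    (R : ℝ) (hR : 0 ≤ R) (a b : ℝ × ℝ) (ha : ‖a‖ ≤ R) (hb : ‖b‖ ≤ R)
    (w : ℝ) (hw0 : 0 ≤ w) (hw1 : w ≤ 1) :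
    ‖(Ft0 θ a + w • Ft1 θ a) - (Ft0 θ b + w • Ft1 θ b)‖ ≤
      ((1 + θ.1 + θ.2.2.1) * (1 + 4 * R) + θ.2.1) * ‖a - b‖ := by
  set D := ‖a - b‖ with hD
  have hD0 : 0 ≤ D := norm_nonneg _
  have ha1 : |a.1| ≤ R := (norm_fst_le a).trans ha
  have ha2 : |a.2| ≤ R := (norm_snd_le a).trans ha
  have hb1 : |b.1| ≤ R := (norm_fst_le b).trans hb
  have hb2 : |b.2| ≤ R := (norm_snd_le b).trans hb
  have hd1 : |a.1 - b.1| ≤ D := by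
    have := norm_fst_le (a - b); simpa using this
  have hd2 : |a.2 - b.2| ≤ D := by
    have := norm_snd_le (a - b); simpa using this
  have hq1 := quad_bound R D a.1 a.2 b.1 b.2 hR ha1 ha2 hb1 hb2 hd1 hd2
  have hq2 := quad_bound R D a.2 a.1 b.2 b.1 hR ha2 ha1 hb2 hb1 hd2 hd1
  have hq2' : |(1 - a.1 - a.2) * a.2 - (1 - b.1 - b.2) * b.2| ≤ (1 + 4 * R) * D := by
    have : (1 - a.2 - a.1) * a.2 - (1 - b.2 - b.1) * b.2
        = (1 - a.1 - a.2) * a.2 - (1 - b.1 - b.2) * b.2 := by ring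
    rwa [this] at hq2
  have hw : |1 - w * θ.1| ≤ 1 + θ.1 := by
    rw [abs_le]
    constructor <;> nlinarith
  have hvec : (Ft0 θ a + w • Ft1 θ a) - (Ft0 θ b + w • Ft1 θ b) =
      ((1 - w * θ.1) * ((1 - a.1 - a.2) * a.1 - (1 - b.1 - b.2) * b.1) - θ.2.1 * (a.1 - b.1),
       θ.2.2.1 * ((1 - a.1 - a.2) * a.2 - (1 - b.1 - b.2) * b.2) - θ.2.1 * (a.2 - b.2)) := by
    simp only [Ft0, Ft1, Prod.mk_add_mk, Prod.smul_mk, Prod.mk_sub_mk, smul_eq_mul, Prod.mk.injEq]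
    constructor <;> ring
  rw [hvec, Prod.norm_def]
  simp only [Real.norm_eq_abs]
  apply max_le
  · calc |(1 - w * θ.1) * ((1 - a.1 - a.2) * a.1 - (1 - b.1 - b.2) * b.1) - θ.2.1 * (a.1 - b.1)|
        ≤ |(1 - w * θ.1) * ((1 - a.1 - a.2) * a.1 - (1 - b.1 - b.2) * b.1)|
          + |θ.2.1 * (a.1 - b.1)| := abs_sub _ _
      _ ≤ (1 + θ.1) * ((1 + 4 * R) * D) + θ.2.1 * D := by
          rw [abs_mul, abs_mul]
          gcongr
          · rw [abs_of_nonneg ht]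
      _ ≤ ((1 + θ.1 + θ.2.2.1) * (1 + 4 * R) + θ.2.1) * D := by
          nlinarith [mul_nonneg (mul_nonneg hr (by linarith : (0:ℝ) ≤ 1 + 4 * R)) hD0]
  · calc |θ.2.2.1 * ((1 - a.1 - a.2) * a.2 - (1 - b.1 - b.2) * b.2) - θ.2.1 * (a.2 - b.2)|
        ≤ |θ.2.2.1 * ((1 - a.1 - a.2) * a.2 - (1 - b.1 - b.2) * b.2)|
          + |θ.2.1 * (a.2 - b.2)| := abs_sub _ _
      _ ≤ θ.2.2.1 * ((1 + 4 * R) * D) + θ.2.1 * D := by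
          rw [abs_mul, abs_mul, abs_of_nonneg hr, abs_of_nonneg ht]
          gcongr
      _ ≤ ((1 + θ.1 + θ.2.2.1) * (1 + 4 * R) + θ.2.1) * D := by
          nlinarith [mul_nonneg (mul_nonneg (by linarith : (0:ℝ) ≤ 1 + θ.1)
            (by linarith : (0:ℝ) ≤ 1 + 4 * R)) hD0]

set_option maxHeartbeats 1000000 in
/-- **Truncated and untruncated dynamics coincide along admissible trajectories
(`J(u) = J'(u)`).** For `u ∈ U` and an admissible parameter `θ`, the solution `x` of the
truncated system starting at `((1−f₀)n₀, f₀n₀) ∈ Δ` stays in `Δ`, also solves the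
untruncated control-affine system, and consequently the running cost
`∫₀^T ℓ(s(τ)+r(τ)) dτ` computed from the truncated dynamics equals the one computed from
any solution `y` of the untruncated dynamics with the same initial datum. -/
theorem truncated_eq_untruncated
    (T : ℝ) (hT : 0 < T)
    (θ : ℝ × ℝ × ℝ × ℝ)
    (hθ : 0 ≤ θ.1 ∧ 0 ≤ θ.2.1 ∧ 0 ≤ θ.2.2.1 ∧ θ.2.2.2 ∈ Icc (0:ℝ) 1)
    (n₀ : ℝ) (hn₀ : n₀ ∈ Ioo (0:ℝ) 1)
    (ℓ : ℝ → ℝ) (hℓ : ContDiff ℝ 2 ℓ)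
    (ρ : ℝ × ℝ → ℝ) (hρ : IsCutoff ρ)
    (u : ℝ → ℝ) (hu : InU T u)
    (x : ℝ → ℝ × ℝ)
    (hx : IsSol T (trunc ρ (Ft0 θ)) (trunc ρ (Ft1 θ)) u x)
    (hx0 : x 0 = ((1 - θ.2.2.2) * n₀, θ.2.2.2 * n₀)) :
    (∀ τ ∈ Icc (0:ℝ) T, x τ ∈ simplexΔ) ∧
    IsSol T (Ft0 θ) (Ft1 θ) u x ∧
    (∀ y : ℝ → ℝ × ℝ, IsSol T (Ft0 θ) (Ft1 θ) u y →
      y 0 = ((1 - θ.2.2.2) * n₀, θ.2.2.2 * n₀) →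
      (∫ τ in (0:ℝ)..T, ℓ ((y τ).1 + (y τ).2)) =
        ∫ τ in (0:ℝ)..T, ℓ ((x τ).1 + (x τ).2)) := by
  obtain ⟨hxc, hxint, hxeq⟩ := hx
  have hT' : (0:ℝ) ≤ T := hT.le
  have hdD : 0 ≤ θ.1 := hθ.1
  have hdT : 0 ≤ θ.2.1 := hθ.2.1
  have hrR : 0 ≤ θ.2.2.1 := hθ.2.2.1
  have hf0 : 0 ≤ θ.2.2.2 := hθ.2.2.2.1
  have hf1 : θ.2.2.2 ≤ 1 := hθ.2.2.2.2
  set H : ℝ → ℝ × ℝ := fun σ => trunc ρ (Ft0 θ) (x σ) + u σ • trunc ρ (Ft1 θ) (x σ) with hHdef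
  have hHint : IntervalIntegrable H volume 0 T := hxint
  have hu2 : ∀ᵐ σ ∂(volume.restrict (Icc (0:ℝ) T)), u σ ∈ Icc (0:ℝ) 1 := hu.2
  obtain ⟨Mx, hMx⟩ := isCompact_Icc.exists_bound_of_continuousOn hxc
  have hMx0 : 0 ≤ Mx := le_trans (norm_nonneg _) (hMx 0 ⟨le_rfl, hT'⟩)
  set K : ℝ := (1 + θ.1 + θ.2.2.1) * (1 + 2 * Mx) + θ.2.1 with hKdef
  have hK0 : 0 ≤ K := by positivity
  have h1int : IntervalIntegrable (fun σ => (H σ).1) volume 0 T :=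
    ⟨(ContinuousLinearMap.fst ℝ ℝ ℝ).integrable_comp hHint.1,
     (ContinuousLinearMap.fst ℝ ℝ ℝ).integrable_comp hHint.2⟩
  have h2int : IntervalIntegrable (fun σ => (H σ).2) volume 0 T :=
    ⟨(ContinuousLinearMap.snd ℝ ℝ ℝ).integrable_comp hHint.1,
     (ContinuousLinearMap.snd ℝ ℝ ℝ).integrable_comp hHint.2⟩
  have hmono : ∀ τ ∈ Icc (0:ℝ) T, ∀ {E : Type} [NormedAddCommGroup E] [NormedSpace ℝ E]
      (f : ℝ → E), IntervalIntegrable f volume 0 T → IntervalIntegrable f volume 0 τ := by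
    intro τ hτ E _ _ f hf
    exact hf.mono_set (by rw [uIcc_of_le hτ.1, uIcc_of_le hT']; exact Icc_subset_Icc le_rfl hτ.2)
  have heqc : ∀ τ ∈ Icc (0:ℝ) T,
      (x τ).1 = (x 0).1 + ∫ σ in (0:ℝ)..τ, (H σ).1 ∧
      (x τ).2 = (x 0).2 + ∫ σ in (0:ℝ)..τ, (H σ).2 := by
    intro τ hτ
    have hHτ : IntervalIntegrable H volume 0 τ := hmono τ hτ H hHint
    have h := hxeq τ hτ
    have e1 : (∫ σ in (0:ℝ)..τ, H σ).1 = ∫ σ in (0:ℝ)..τ, (H σ).1 :=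
      ((ContinuousLinearMap.fst ℝ ℝ ℝ).intervalIntegral_comp_comm hHτ).symm
    have e2 : (∫ σ in (0:ℝ)..τ, H σ).2 = ∫ σ in (0:ℝ)..τ, (H σ).2 :=
      ((ContinuousLinearMap.snd ℝ ℝ ℝ).intervalIntegral_comp_comm hHτ).symm
    constructor
    · have := congrArg Prod.fst h
      rwa [Prod.fst_add, e1] at this
    · have := congrArg Prod.snd h
      rwa [Prod.snd_add, e2] at this
  -- bounds valid at points of [0,T]
  have hsb : ∀ σ ∈ Icc (0:ℝ) T, |(x σ).1| ≤ Mx := by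
    intro σ hσ
    have := (norm_fst_le (x σ)).trans (hMx σ hσ)
    rwa [Real.norm_eq_abs] at this
  have hrb : ∀ σ ∈ Icc (0:ℝ) T, |(x σ).2| ≤ Mx := by
    intro σ hσ
    have := (norm_snd_le (x σ)).trans (hMx σ hσ)
    rwa [Real.norm_eq_abs] at this
  -- Step A : first component stays nonnegative
  have hids : ∀ σ, (H σ).1 =
      (ρ (x σ) * ((1 - (x σ).1 - (x σ).2) * (1 - u σ * θ.1) - θ.2.1)) * (x σ).1 := by
    intro σ
    simp only [hHdef, trunc, Ft0, Ft1, Prod.fst_add, Prod.smul_fst, smul_eq_mul]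
    ring
  have hstepA : ∀ τ ∈ Icc (0:ℝ) T, 0 ≤ (x τ).1 := by
    apply my_nonneg T K hT' hK0 _ _ (continuous_fst.comp_continuousOn hxc) h1int
      (fun τ hτ => (heqc τ hτ).1)
    · show 0 ≤ (x 0).1
      rw [hx0]
      exact mul_nonneg (by linarith) hn₀.1.le
    · filter_upwards [hu2, ae_restrict_mem measurableSet_Icc] with σ huσ hσmem hvneg
      rw [hids σ]
      have hs1 := hsb σ hσmem
      have hs2 := hrb σ hσmem
      have hp := hρ.2.1 (x σ)
      have habs1 : |1 - (x σ).1 - (x σ).2| ≤ 1 + 2 * Mx := by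
        obtain ⟨l1, r1⟩ := abs_le.mp hs1
        obtain ⟨l2, r2⟩ := abs_le.mp hs2
        rw [abs_le]; constructor <;> linarith
      have habs2 : |1 - u σ * θ.1| ≤ 1 + θ.1 := by
        rw [abs_le]; constructor <;> nlinarith [huσ.1, huσ.2]
      have hprod : (1 - (x σ).1 - (x σ).2) * (1 - u σ * θ.1) ≤ (1 + 2 * Mx) * (1 + θ.1) :=
        le_trans (le_abs_self _) (by
          rw [abs_mul]
          exact mul_le_mul habs1 habs2 (abs_nonneg _) (by linarith))
      have hqK : (1 - (x σ).1 - (x σ).2) * (1 - u σ * θ.1) - θ.2.1 ≤ K := by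
        rw [hKdef]; nlinarith [mul_nonneg hrR (by linarith : (0:ℝ) ≤ 1 + 2 * Mx)]
      have hcoef : ρ (x σ) * ((1 - (x σ).1 - (x σ).2) * (1 - u σ * θ.1) - θ.2.1) ≤ K := by
        nlinarith [mul_le_mul_of_nonneg_left hqK hp.1,
          mul_le_mul_of_nonneg_right hp.2 hK0]
      exact mul_le_mul_of_nonpos_right hcoef hvneg
  -- Step B : second component stays nonnegative
  have hidr : ∀ σ, (H σ).2 =
      (ρ (x σ) * (θ.2.2.1 * (1 - (x σ).1 - (x σ).2) - θ.2.1)) * (x σ).2 := by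
    intro σ
    simp only [hHdef, trunc, Ft0, Ft1, Prod.snd_add, Prod.smul_snd, smul_eq_mul]
    ring
  have hstepB : ∀ τ ∈ Icc (0:ℝ) T, 0 ≤ (x τ).2 := by
    apply my_nonneg T K hT' hK0 _ _ (continuous_snd.comp_continuousOn hxc) h2int
      (fun τ hτ => (heqc τ hτ).2)
    · show 0 ≤ (x 0).2
      rw [hx0]
      exact mul_nonneg hf0 hn₀.1.le
    · filter_upwards [hu2, ae_restrict_mem measurableSet_Icc] with σ huσ hσmem hvneg
      rw [hidr σ]
      have hs1 := hsb σ hσmem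
      have hs2 := hrb σ hσmem
      have hp := hρ.2.1 (x σ)
      have habs1 : |1 - (x σ).1 - (x σ).2| ≤ 1 + 2 * Mx := by
        obtain ⟨l1, r1⟩ := abs_le.mp hs1
        obtain ⟨l2, r2⟩ := abs_le.mp hs2
        rw [abs_le]; constructor <;> linarith
      have hprod : θ.2.2.1 * (1 - (x σ).1 - (x σ).2) ≤ θ.2.2.1 * (1 + 2 * Mx) :=
        mul_le_mul_of_nonneg_left (le_trans (le_abs_self _) habs1) hrR
      have hqK : θ.2.2.1 * (1 - (x σ).1 - (x σ).2) - θ.2.1 ≤ K := by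
        rw [hKdef]; nlinarith [mul_nonneg hdD (by linarith : (0:ℝ) ≤ 1 + 2 * Mx), hMx0]
      have hcoef : ρ (x σ) * (θ.2.2.1 * (1 - (x σ).1 - (x σ).2) - θ.2.1) ≤ K := by
        nlinarith [mul_le_mul_of_nonneg_left hqK hp.1,
          mul_le_mul_of_nonneg_right hp.2 hK0]
      exact mul_le_mul_of_nonpos_right hcoef hvneg
  -- Step C : 1 - s - r stays nonnegative
  have hidm : ∀ σ, -(H σ).1 - (H σ).2 =
      (-(ρ (x σ) * ((1 - u σ * θ.1) * (x σ).1 + θ.2.2.1 * (x σ).2)))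
        * (1 - (x σ).1 - (x σ).2)
      + ρ (x σ) * θ.2.1 * ((x σ).1 + (x σ).2) := by
    intro σ
    simp only [hHdef, trunc, Ft0, Ft1, Prod.fst_add, Prod.snd_add, Prod.smul_fst,
      Prod.smul_snd, smul_eq_mul]
    ring
  have hstepC : ∀ τ ∈ Icc (0:ℝ) T, 0 ≤ 1 - (x τ).1 - (x τ).2 := by
    apply my_nonneg T K hT' hK0 (fun τ => 1 - (x τ).1 - (x τ).2)
      (fun σ => -(H σ).1 - (H σ).2)
      (by
        exact (continuousOn_const.sub (continuous_fst.comp_continuousOn hxc)).sub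
          (continuous_snd.comp_continuousOn hxc))
      ((h1int.neg).sub h2int)
    · intro τ hτ
      have e1 := (heqc τ hτ).1
      have e2 := (heqc τ hτ).2
      have hi : ∫ σ in (0:ℝ)..τ, (-(H σ).1 - (H σ).2)
          = -(∫ σ in (0:ℝ)..τ, (H σ).1) - ∫ σ in (0:ℝ)..τ, (H σ).2 := by
        rw [show (fun σ => -(H σ).1 - (H σ).2) = (fun σ => -((H σ).1 + (H σ).2)) from
          funext fun σ => by ring]
        rw [intervalIntegral.integral_neg,
          intervalIntegral.integral_add (hmono τ hτ _ h1int) (hmono τ hτ _ h2int)]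
        ring
      rw [hi, e1, e2]; ring
    · show 0 ≤ 1 - (x 0).1 - (x 0).2
      rw [hx0]
      simp only []
      nlinarith [hn₀.2]
    · filter_upwards [hu2, ae_restrict_mem measurableSet_Icc] with σ huσ hσmem hvneg
      rw [hidm σ]
      have hs1 := hsb σ hσmem
      have hs2 := hrb σ hσmem
      have hp := hρ.2.1 (x σ)
      have habs2 : |1 - u σ * θ.1| ≤ 1 + θ.1 := by
        rw [abs_le]; constructor <;> nlinarith [huσ.1, huσ.2]
      have hg : 0 ≤ ρ (x σ) * θ.2.1 * ((x σ).1 + (x σ).2) := by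
        apply mul_nonneg (mul_nonneg hp.1 hdT)
        have := hstepA σ hσmem
        have := hstepB σ hσmem
        linarith
      have habsX : |(1 - u σ * θ.1) * (x σ).1 + θ.2.2.1 * (x σ).2|
          ≤ (1 + θ.1) * Mx + θ.2.2.1 * Mx := by
        refine (abs_add_le _ _).trans ?_
        rw [abs_mul, abs_mul, abs_of_nonneg hrR]
        have t1 : |1 - u σ * θ.1| * |(x σ).1| ≤ (1 + θ.1) * Mx :=
          mul_le_mul habs2 hs1 (abs_nonneg _) (by linarith)
        have t2 : θ.2.2.1 * |(x σ).2| ≤ θ.2.2.1 * Mx :=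
          mul_le_mul_of_nonneg_left hs2 hrR
        linarith
      have hcoef : -(ρ (x σ) * ((1 - u σ * θ.1) * (x σ).1 + θ.2.2.1 * (x σ).2)) ≤ K := by
        have h1 : -(ρ (x σ) * ((1 - u σ * θ.1) * (x σ).1 + θ.2.2.1 * (x σ).2))
            ≤ |ρ (x σ) * ((1 - u σ * θ.1) * (x σ).1 + θ.2.2.1 * (x σ).2)| := neg_le_abs _
        rw [abs_mul, abs_of_nonneg hp.1] at h1
        have h2 : ρ (x σ) * |(1 - u σ * θ.1) * (x σ).1 + θ.2.2.1 * (x σ).2|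
            ≤ |(1 - u σ * θ.1) * (x σ).1 + θ.2.2.1 * (x σ).2| :=
          mul_le_of_le_one_left (abs_nonneg _) hp.2
        have h3 : (1 + θ.1) * Mx + θ.2.2.1 * Mx ≤ K := by
          rw [hKdef]
          nlinarith [mul_nonneg hdD hMx0, mul_nonneg hrR hMx0]
        linarith
      have := mul_le_mul_of_nonpos_right hcoef hvneg
      linarith
  -- Part 1 : the trajectory stays in the simplex
  have hΔ : ∀ τ ∈ Icc (0:ℝ) T, x τ ∈ simplexΔ := by
    intro τ hτ
    refine ⟨hstepA τ hτ, hstepB τ hτ, ?_⟩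
    have := hstepC τ hτ; linarith
  -- Part 2 : on the simplex the cut-off is 1
  have hρ1 : ∀ τ ∈ Icc (0:ℝ) T, ρ (x τ) = 1 := by
    intro τ hτ
    apply hρ.2.2.1
    rw [Metric.mem_ball, dist_zero_right, Prod.norm_def]
    obtain ⟨h1, h2, h3⟩ := hΔ τ hτ
    apply max_lt <;> rw [Real.norm_eq_abs, abs_lt] <;> constructor <;> linarith
  have hHuntr : ∀ σ ∈ Icc (0:ℝ) T, H σ = Ft0 θ (x σ) + u σ • Ft1 θ (x σ) := by
    intro σ hσ
    simp [hHdef, trunc, hρ1 σ hσ]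
  have hx' : IsSol T (Ft0 θ) (Ft1 θ) u x := by
    refine ⟨hxc, ?_, ?_⟩
    · rw [intervalIntegrable_iff_integrableOn_Ioc_of_le hT']
      exact ((intervalIntegrable_iff_integrableOn_Ioc_of_le hT').mp hHint).congr_fun
        (fun σ hσ => hHuntr σ (Ioc_subset_Icc_self hσ)) measurableSet_Ioc
    · intro τ hτ
      rw [hxeq τ hτ]
      congr 1
      apply intervalIntegral.integral_congr
      intro σ hσ
      rw [uIcc_of_le hτ.1] at hσ
      exact hHuntr σ (Icc_subset_Icc le_rfl hτ.2 hσ)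
  refine ⟨hΔ, hx', ?_⟩
  -- Part 3 : uniqueness for the untruncated system
  intro y hy hy0
  obtain ⟨hyc, hyint, hyeq⟩ := hy
  obtain ⟨Cy, hCy⟩ := isCompact_Icc.exists_bound_of_continuousOn hyc
  set R : ℝ := max 1 Cy with hRdef
  have hR1 : (1:ℝ) ≤ R := le_max_left _ _
  have hR0 : (0:ℝ) ≤ R := by linarith
  have hxR : ∀ σ ∈ Icc (0:ℝ) T, ‖x σ‖ ≤ R := by
    intro σ hσ
    obtain ⟨h1, h2, h3⟩ := hΔ σ hσ
    rw [Prod.norm_def]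
    apply max_le <;> rw [Real.norm_eq_abs, abs_le] <;> constructor <;> linarith
  have hyR : ∀ σ ∈ Icc (0:ℝ) T, ‖y σ‖ ≤ R := fun σ hσ => (hCy σ hσ).trans (le_max_right _ _)
  set L : ℝ := (1 + θ.1 + θ.2.2.1) * (1 + 4 * R) + θ.2.1 with hLdef
  have hL0 : 0 ≤ L := by positivity
  set Gx : ℝ → ℝ × ℝ := fun σ => Ft0 θ (x σ) + u σ • Ft1 θ (x σ) with hGxdef
  set Gy : ℝ → ℝ × ℝ := fun σ => Ft0 θ (y σ) + u σ • Ft1 θ (y σ) with hGydef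
  have hGxint : IntervalIntegrable Gx volume 0 T := hx'.2.1
  have hφc : ContinuousOn (fun τ => ‖x τ - y τ‖) (Icc 0 T) := (hxc.sub hyc).norm
  have hzero : ∀ τ ∈ Icc (0:ℝ) T, ‖x τ - y τ‖ = 0 := by
    apply my_gron T L hL0 _ hφc (fun τ _ => norm_nonneg _)
    intro τ hτ
    have hGxτ : IntervalIntegrable Gx volume 0 τ := hmono τ hτ Gx hGxint
    have hGyτ : IntervalIntegrable Gy volume 0 τ := hmono τ hτ Gy hyint
    have h0 : x τ - y τ = ∫ σ in (0:ℝ)..τ, (Gx σ - Gy σ) := by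
      rw [intervalIntegral.integral_sub hGxτ hGyτ, hx'.2.2 τ hτ, hyeq τ hτ, hx0, hy0]
      abel
    have hsub : Icc (0:ℝ) τ ⊆ Icc 0 T := Icc_subset_Icc le_rfl hτ.2
    calc ‖x τ - y τ‖ = ‖∫ σ in (0:ℝ)..τ, (Gx σ - Gy σ)‖ := by rw [h0]
      _ ≤ ∫ σ in (0:ℝ)..τ, ‖Gx σ - Gy σ‖ :=
          intervalIntegral.norm_integral_le_integral_norm hτ.1
      _ ≤ ∫ σ in (0:ℝ)..τ, L * ‖x σ - y σ‖ := by
          apply intervalIntegral.integral_mono_ae_restrict hτ.1 (hGxτ.sub hGyτ).norm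
          · apply ContinuousOn.intervalIntegrable
            rw [uIcc_of_le hτ.1]
            exact continuousOn_const.mul (hφc.mono hsub)
          · filter_upwards [ae_restrict_of_ae_restrict_of_subset hsub hu2,
              ae_restrict_mem measurableSet_Icc] with σ huσ hσmem
            exact lip_bound θ hdD hdT hrR R hR0 (x σ) (y σ) (hxR σ (hsub hσmem))
              (hyR σ (hsub hσmem)) (u σ) huσ.1 huσ.2
      _ = L * ∫ σ in (0:ℝ)..τ, ‖x σ - y σ‖ := intervalIntegral.integral_const_mul _ _
  apply intervalIntegral.integral_congr
  intro τ hτ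
  rw [uIcc_of_le hT'] at hτ
  have hxy : x τ = y τ := by
    have := hzero τ hτ
    rw [norm_eq_zero, sub_eq_zero] at this
    exact this
  simp only [hxy]
end
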